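/- Let c ∈ ℝ, let a be a P-periodic locally integrable weight satisfying (a*), and let g : [0,1] → ℝ be continuous satisfying (g*). Let λ, μ > 0, α ≥ 0, and let ρ ∈ (0,1). Let v be the indicator function of ⋃_{i∈𝓘} I⁺_i for a non-empty set 𝓘 ⊆ {1,…,m}. If α > (2ρ/ε)e^{|c||I⁺_j|} + 2|c|ρ)/(τ_j − σ_j − 2ε) for some j ∈ 𝓘 and some ε ∈ (0,(τ_j−σ_j)/2), then there is no non-negative P-periodic solution u of u'' + cu' + (λa⁺(x) − μa⁻(x))g(u) + αv(x) = 0 with u(x) ≤ ρ for all x ∈ ⋃_{i∈𝓘} I⁺_i. In particular, for α sufficiently large no such solution exists. -/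

import Mathlib

open MeasureTheory Set Filter Topology

noncomputable section

/-- Carathéodory solution of `u'' + c u' + h(x, u(x)) = 0` on `J`:
`u` is C¹ on `J` with derivative `u'`, which is (locally) absolutely continuous with
a.e.-derivative `u''`, and the equation holds a.e. on `J`. -/
def CaraSol (c : ℝ) (h : ℝ → ℝ → ℝ) (u u' : ℝ → ℝ) (J : Set ℝ) : Prop :=
  (∀ x ∈ J, HasDerivWithinAt u (u' x) J x) ∧
  ContinuousOn u' J ∧
  ∃ u'' : ℝ → ℝ,
    (∀ x ∈ J, ∀ y ∈ J, u' y - u' x = ∫ t in x..y, u'' t) ∧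
    (∀ᵐ x ∂(volume.restrict J), u'' x + c * u' x + h x (u x) = 0)

/-- positive part `a⁺` of a weight -/
def pospart (a : ℝ → ℝ) : ℝ → ℝ := fun x => max (a x) 0

/-- negative part `a⁻` of a weight -/
def negpart (a : ℝ → ℝ) : ℝ → ℝ := fun x => max (-a x) 0

/-- the two-parameter weight `a_{λ,μ} = λ a⁺ - μ a⁻` -/
def awt (a : ℝ → ℝ) (lam mu : ℝ) : ℝ → ℝ := fun x => lam * pospart a x - mu * negpart a x

/-- the critical ratio `μ#(λ) = λ ∫₀^P a⁺ / ∫₀^P a⁻` -/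
def muSharp (a : ℝ → ℝ) (P lam : ℝ) : ℝ :=
  lam * (∫ x in (0:ℝ)..P, pospart a x) / (∫ x in (0:ℝ)..P, negpart a x)

/-- A `P`-periodic locally integrable weight satisfying `(a*)`, with `m` positivity
intervals `I⁺ᵢ = [σ i, τ i]` separated by negativity intervals `I⁻ᵢ = [τ i, σ (i+1)]`. -/
structure AStar (P : ℝ) (m : ℕ) (a : ℝ → ℝ) (σ τ : ℕ → ℝ) : Prop where
  hP : 0 < P
  hm : 1 ≤ m
  periodic : ∀ x, a (x + P) = a x
  locint : LocallyIntegrable a volume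
  σ_one : σ 1 = 0
  σ_last : σ (m + 1) = P
  lt_στ : ∀ i ∈ Finset.Icc 1 m, σ i < τ i
  lt_τσ : ∀ i ∈ Finset.Icc 1 m, τ i < σ (i + 1)
  pos_ae : ∀ i ∈ Finset.Icc 1 m, ∀ᵐ x ∂(volume.restrict (Icc (σ i) (τ i))), 0 ≤ a x
  pos_ne : ∀ i ∈ Finset.Icc 1 m, ¬ (∀ᵐ x ∂(volume.restrict (Icc (σ i) (τ i))), a x = 0)
  neg_ae : ∀ i ∈ Finset.Icc 1 m, ∀ᵐ x ∂(volume.restrict (Icc (τ i) (σ (i + 1)))), a x ≤ 0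
  neg_ne : ∀ i ∈ Finset.Icc 1 m, ¬ (∀ᵐ x ∂(volume.restrict (Icc (τ i) (σ (i + 1)))), a x = 0)

/-- condition `(g*)` -/
def Gstar (g : ℝ → ℝ) : Prop := g 0 = 0 ∧ g 1 = 0 ∧ ∀ u ∈ Ioo (0:ℝ) 1, 0 < g u

/-- condition `(g₀)`: `g(u)/u → 0` as `u → 0⁺` -/
def Gzero (g : ℝ → ℝ) : Prop := Tendsto (fun u => g u / u) (𝓝[>] (0:ℝ)) (𝓝 0)

/-- condition `(g₁)`: `limsup_{u→1⁻} g(u)/(1-u) < ∞` -/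
def Gone (g : ℝ → ℝ) : Prop := ∃ K : ℝ, ∀ᶠ u in 𝓝[<] (1:ℝ), g u / (1 - u) ≤ K

/-- `P`-periodic Carathéodory solution of `u'' + c u' + w(x) g(u) = 0` on `ℝ`. -/
def PerSol (c : ℝ) (w g u u' : ℝ → ℝ) (P : ℝ) : Prop :=
  CaraSol c (fun x v => w x * g v) u u' univ ∧ ∀ x, u (x + P) = u x

/-!
Integrate the equation over `[ξ₁, ξ₂] ⊆ I⁺_j`, where `ξ₁ ∈ (σ_j, σ_j + ε)` and
`ξ₂ ∈ (τ_j - ε, τ_j)` are mean-value points, so that `|u'(ξᵢ)| ≤ ρ/ε` because `0 ≤ u ≤ ρ`.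
On `I⁺_j` the term `(λa⁺ - μa⁻) g(u)` is non-negative and the forcing equals `α`, hence
`α (ξ₂ - ξ₁) ≤ u'(ξ₁) - u'(ξ₂) - c (u(ξ₂) - u(ξ₁)) ≤ 2ρ/ε + |c| ρ`,
which contradicts the bound on `α` since `ξ₂ - ξ₁ ≥ τ_j - σ_j - 2ε` and `e^{|c| |I⁺_j|} ≥ 1`.
-/

namespace AStar

variable {P : ℝ} {m : ℕ} {a : ℝ → ℝ} {σ τ : ℕ → ℝ}

theorem monotoneOn_σ (ha : AStar P m a σ τ) : MonotoneOn σ (Icc 1 (m + 1)) := by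
  refine monotoneOn_of_le_succ ordConnected_Icc fun i _ hi hi' => ?_
  rw [Order.succ_eq_add_one] at hi' ⊢
  have hi : i ∈ Finset.Icc 1 m := Finset.mem_Icc.mpr ⟨hi.1, by have := hi'.2; omega⟩
  exact (ha.lt_στ i hi).le.trans (ha.lt_τσ i hi).le

theorem Icc_σ_τ_subset (ha : AStar P m a σ τ) {j : ℕ} (hj : j ∈ Finset.Icc 1 m) :
    Icc (σ j) (τ j) ⊆ Icc 0 P := by
  obtain ⟨hj1, hjm⟩ := Finset.mem_Icc.mp hj
  have h0 : σ 1 ≤ σ j := ha.monotoneOn_σ ⟨le_rfl, by omega⟩ ⟨hj1, by omega⟩ hj1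
  have hP : σ (j + 1) ≤ σ (m + 1) :=
    ha.monotoneOn_σ ⟨by omega, by omega⟩ ⟨by omega, le_rfl⟩ (by omega)
  rw [ha.σ_one] at h0
  rw [ha.σ_last] at hP
  exact Icc_subset_Icc h0 ((ha.lt_τσ j hj).le.trans hP)

end AStar

theorem awt_eq_of_nonneg {a : ℝ → ℝ} {x : ℝ} (hx : 0 ≤ a x) (lam mu : ℝ) :
    awt a lam mu x = lam * a x := by
  simp [awt, pospart, negpart, hx]

theorem IntegrableOn.awt {a : ℝ → ℝ} {s : Set ℝ} (ha : IntegrableOn a s) (lam mu : ℝ) :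
    IntegrableOn (awt a lam mu) s :=
  (ha.pos_part.const_mul lam).sub (ha.neg.pos_part.const_mul mu)

theorem Gstar.nonneg {g : ℝ → ℝ} (hg : Gstar g) {v : ℝ} (hv : v ∈ Icc (0 : ℝ) 1) : 0 ≤ g v := by
  rcases hv.1.eq_or_lt with rfl | h0
  · exact hg.1.ge
  rcases hv.2.eq_or_lt with rfl | h1
  · exact hg.2.1.ge
  exact (hg.2.2 v ⟨h0, h1⟩).le

theorem exists_abs_deriv_le_of_mapsTo_Icc {u u' : ℝ → ℝ} {s t lo hi : ℝ} (hst : s < t)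
    (hc : ContinuousOn u (Icc s t)) (hd : ∀ x ∈ Ioo s t, HasDerivAt u (u' x) x)
    (hu : MapsTo u (Icc s t) (Icc lo hi)) :
    ∃ ξ ∈ Ioo s t, |u' ξ| ≤ (hi - lo) / (t - s) := by
  obtain ⟨ξ, hξ, hslope⟩ := exists_hasDerivAt_eq_slope u u' hst hc hd
  refine ⟨ξ, hξ, ?_⟩
  have hs := hu (left_mem_Icc.mpr hst.le)
  have ht := hu (right_mem_Icc.mpr hst.le)
  rw [hslope, abs_div, abs_of_pos (sub_pos.mpr hst)]
  gcongr
  exact abs_sub_le_iff.mpr ⟨by linarith [hs.1, ht.2], by linarith [hs.2, ht.1]⟩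

namespace CaraSol

variable {c : ℝ} {h : ℝ → ℝ → ℝ} {u u' : ℝ → ℝ} {J : Set ℝ}

theorem hasDerivAt (hsol : CaraSol c h u u' J) {x : ℝ} (hx : J ∈ 𝓝 x) :
    HasDerivAt u (u' x) x :=
  (hsol.1 x (mem_of_mem_nhds hx)).hasDerivAt hx

theorem continuousOn (hsol : CaraSol c h u u' J) : ContinuousOn u J :=
  fun x hx => (hsol.1 x hx).continuousWithinAt

theorem deriv_sub_add_integral_eq_zero (hsol : CaraSol c h u u' J) {x₁ x₂ : ℝ}
    (hx : x₁ ≤ x₂) (hJ : Icc x₁ x₂ ⊆ J)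
    (hint : IntegrableOn (fun x => h x (u x)) (Icc x₁ x₂)) :
    u' x₂ - u' x₁ + c * (u x₂ - u x₁) + ∫ x in x₁..x₂, h x (u x) = 0 := by
  obtain ⟨u'', hftc, hae⟩ := hsol.2.2
  have hu'int : IntervalIntegrable u' volume x₁ x₂ :=
    (hsol.2.1.mono hJ).intervalIntegrable_of_Icc hx
  have hhint : IntervalIntegrable (fun x => h x (u x)) volume x₁ x₂ :=
    (intervalIntegrable_iff_integrableOn_Icc_of_le hx).mpr hint
  have hu : ∫ x in x₁..x₂, u' x = u x₂ - u x₁ := by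
    refine intervalIntegral.integral_eq_sub_of_hasDeriv_right_of_le hx (hsol.continuousOn.mono hJ)
      (fun x hx' => ?_) hu'int
    exact (hsol.hasDerivAt (mem_of_superset (Icc_mem_nhds hx'.1 hx'.2) hJ)).hasDerivWithinAt
  have hu'' : ∫ x in x₁..x₂, u'' x = ∫ x in x₁..x₂, -(c * u' x + h x (u x)) := by
    refine intervalIntegral.integral_congr_ae ?_
    rw [uIoc_of_le hx]
    have := ae_restrict_of_ae_restrict_of_subset (Ioc_subset_Icc_self.trans hJ) hae
    filter_upwards [(ae_restrict_iff' measurableSet_Ioc).mp this] with x hx' hmem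
    linarith [hx' hmem]
  rw [hftc x₁ (hJ (left_mem_Icc.mpr hx)) x₂ (hJ (right_mem_Icc.mpr hx)), hu'',
    intervalIntegral.integral_neg, intervalIntegral.integral_add (hu'int.const_mul c) hhint,
    intervalIntegral.integral_const_mul, hu]
  ring

theorem mul_sub_le_of_forcing_le (hsol : CaraSol c h u u' J) {s t ε ρ α : ℝ}
    (hJ : Icc s t ⊆ J) (hε : 0 < ε) (hεst : 2 * ε ≤ t - s) (hα : 0 ≤ α)
    (hu : MapsTo u (Icc s t) (Icc 0 ρ)) (hint : IntegrableOn (fun x => h x (u x)) (Icc s t))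
    (hforce : ∀ᵐ x ∂volume.restrict (Icc s t), α ≤ h x (u x)) :
    α * (t - s - 2 * ε) ≤ 2 * ρ / ε + |c| * ρ := by
  have hd : ∀ x ∈ Ioo s t, HasDerivAt u (u' x) x := fun x hx =>
    hsol.hasDerivAt (mem_of_superset (Icc_mem_nhds hx.1 hx.2) hJ)
  have hsub₁ : Icc s (s + ε) ⊆ Icc s t := Icc_subset_Icc le_rfl (by linarith)
  have hsub₂ : Icc (t - ε) t ⊆ Icc s t := Icc_subset_Icc (by linarith) le_rfl
  obtain ⟨ξ₁, hξ₁, hb₁⟩ := exists_abs_deriv_le_of_mapsTo_Icc (by linarith : s < s + ε)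
    (hsol.continuousOn.mono (hsub₁.trans hJ)) (fun x hx => hd x (Ioo_subset_Ioo_right
      (by linarith) hx)) (hu.mono_left hsub₁)
  obtain ⟨ξ₂, hξ₂, hb₂⟩ := exists_abs_deriv_le_of_mapsTo_Icc (by linarith : t - ε < t)
    (hsol.continuousOn.mono (hsub₂.trans hJ)) (fun x hx => hd x (Ioo_subset_Ioo_left
      (by linarith) hx)) (hu.mono_left hsub₂)
  rw [sub_zero, add_sub_cancel_left] at hb₁
  rw [sub_zero, sub_sub_cancel] at hb₂
  have hξ : ξ₁ ≤ ξ₂ := by linarith [hξ₁.2, hξ₂.1]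
  have hsub : Icc ξ₁ ξ₂ ⊆ Icc s t := Icc_subset_Icc hξ₁.1.le hξ₂.2.le
  have hid := hsol.deriv_sub_add_integral_eq_zero hξ (hsub.trans hJ) (hint.mono_set hsub)
  have hlow : α * (ξ₂ - ξ₁) ≤ ∫ x in ξ₁..ξ₂, h x (u x) :=
    calc α * (ξ₂ - ξ₁) = ∫ _ in ξ₁..ξ₂, α := by simp [mul_comm]
    _ ≤ _ := intervalIntegral.integral_mono_ae_restrict hξ intervalIntegrable_const
      ((intervalIntegrable_iff_integrableOn_Icc_of_le hξ).mpr (hint.mono_set hsub))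
      (ae_restrict_of_ae_restrict_of_subset hsub hforce)
  have hosc : |c * (u ξ₂ - u ξ₁)| ≤ |c| * ρ := by
    have h₁ := hu (hsub (left_mem_Icc.mpr hξ))
    have h₂ := hu (hsub (right_mem_Icc.mpr hξ))
    rw [abs_mul]
    gcongr
    exact abs_sub_le_of_nonneg_of_le h₂.1 h₂.2 h₁.1 h₁.2
  have hlen : α * (t - s - 2 * ε) ≤ α * (ξ₂ - ξ₁) :=
    mul_le_mul_of_nonneg_left (by linarith [hξ₁.2, hξ₂.1]) hα
  linarith [le_abs_self (u' ξ₁), neg_abs_le (u' ξ₂), neg_abs_le (c * (u ξ₂ - u ξ₁)),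
    (by ring : 2 * ρ / ε = ρ / ε + ρ / ε)]

end CaraSol

theorem statement17_general (c P : ℝ) (m : ℕ) (a : ℝ → ℝ) (σ τ : ℕ → ℝ)
    (ha : AStar P m a σ τ)
    (g : ℝ → ℝ) (hg : ContinuousOn g (Icc 0 1)) (hgs : Gstar g)
    (lam mu α ρ : ℝ) (hlam : 0 < lam) (hα : 0 ≤ α)
    (hρ : ρ ∈ Ioo (0:ℝ) 1)
    (I : Finset ℕ) (hIsub : I ⊆ Finset.Icc 1 m)
    (j : ℕ) (hj : j ∈ I) (ε : ℝ) (hε : 0 < ε) (hε2 : ε < (τ j - σ j) / 2)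
    (hαbig : (2 * ρ / ε * Real.exp (|c| * (τ j - σ j)) + 2 * |c| * ρ) /
        (τ j - σ j - 2 * ε) < α) :
    ¬ ∃ u u' : ℝ → ℝ,
        CaraSol c (fun x v => awt a lam mu x * g v +
            α * Set.indicator (⋃ i ∈ I, Icc (σ i) (τ i)) (fun _ => (1:ℝ)) x)
          u u' (Icc 0 P) ∧
        u 0 = u P ∧ u' 0 = u' P ∧
        (∀ x ∈ Icc (0:ℝ) P, 0 ≤ u x) ∧
        (∀ x ∈ ⋃ i ∈ I, Icc (σ i) (τ i), u x ≤ ρ) := by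
  rintro ⟨u, u', hsol, -, -, hnonneg, hleρ⟩
  have hjm := hIsub hj
  have hIP := ha.Icc_σ_τ_subset hjm
  have hU : Icc (σ j) (τ j) ⊆ ⋃ i ∈ I, Icc (σ i) (τ i) :=
    subset_biUnion_of_mem (u := fun i => Icc (σ i) (τ i)) hj
  have hu : MapsTo u (Icc (σ j) (τ j)) (Icc 0 ρ) := fun x hx =>
    ⟨hnonneg x (hIP hx), hleρ x (hU hx)⟩
  have hu₁ : MapsTo u (Icc (σ j) (τ j)) (Icc 0 1) := hu.mono_right (Icc_subset_Icc_right hρ.2.le)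
  have hint : IntegrableOn (fun x => awt a lam mu x * g (u x) +
      α * (⋃ i ∈ I, Icc (σ i) (τ i)).indicator (fun _ => (1:ℝ)) x) (Icc (σ j) (τ j)) :=
    ((IntegrableOn.awt (ha.locint.integrableOn_isCompact isCompact_Icc) lam mu).mul_continuousOn
      (hg.comp (hsol.continuousOn.mono hIP) hu₁) isCompact_Icc).add
      (((integrableOn_const (C := (1 : ℝ)) measure_Icc_lt_top.ne).indicator
        (I.measurableSet_biUnion fun i _ => measurableSet_Icc)).const_mul α)
  have hforce : ∀ᵐ x ∂volume.restrict (Icc (σ j) (τ j)), α ≤ awt a lam mu x * g (u x) +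
      α * (⋃ i ∈ I, Icc (σ i) (τ i)).indicator (fun _ => (1:ℝ)) x := by
    filter_upwards [ha.pos_ae j hjm, ae_restrict_mem measurableSet_Icc] with x hax hx
    rw [awt_eq_of_nonneg hax, indicator_of_mem (hU hx), mul_one]
    have := mul_nonneg (mul_nonneg hlam.le hax) (hgs.nonneg (hu₁ hx))
    linarith
  have hbound := hsol.mul_sub_le_of_forcing_le hIP hε (by linarith) hα hu hint hforce
  have hexp : 2 * ρ / ε ≤ 2 * ρ / ε * Real.exp (|c| * (τ j - σ j)) :=
    le_mul_of_one_le_right (by have := hρ.1; positivity)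
      (Real.one_le_exp (mul_nonneg (abs_nonneg c) (by linarith)))
  rw [div_lt_iff₀ (by linarith)] at hαbig
  linarith [mul_nonneg (abs_nonneg c) hρ.1.le]

/-- Verification of hypothesis (H₂): for `α` large enough, the problem with forcing
term `α·𝟙_{⋃_{i∈𝓘} I⁺_i}` has no non-negative periodic solution with `u ≤ ρ` on
`⋃_{i∈𝓘} I⁺_i`. -/
theorem statement17 (c P : ℝ) (m : ℕ) (a : ℝ → ℝ) (σ τ : ℕ → ℝ)
    (ha : AStar P m a σ τ)
    (g : ℝ → ℝ) (hg : ContinuousOn g (Icc 0 1)) (hgs : Gstar g)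
    (lam mu α ρ : ℝ) (hlam : 0 < lam) (hmu : 0 < mu) (hα : 0 ≤ α)
    (hρ : ρ ∈ Ioo (0:ℝ) 1)
    (I : Finset ℕ) (hIne : I.Nonempty) (hIsub : I ⊆ Finset.Icc 1 m)
    (j : ℕ) (hj : j ∈ I) (ε : ℝ) (hε : 0 < ε) (hε2 : ε < (τ j - σ j) / 2)
    (hαbig : (2 * ρ / ε * Real.exp (|c| * (τ j - σ j)) + 2 * |c| * ρ) /
        (τ j - σ j - 2 * ε) < α) :
    ¬ ∃ u u' : ℝ → ℝ,
        CaraSol c (fun x v => awt a lam mu x * g v +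
            α * Set.indicator (⋃ i ∈ I, Icc (σ i) (τ i)) (fun _ => (1:ℝ)) x)
          u u' (Icc 0 P) ∧
        u 0 = u P ∧ u' 0 = u' P ∧
        (∀ x ∈ Icc (0:ℝ) P, 0 ≤ u x) ∧
        (∀ x ∈ ⋃ i ∈ I, Icc (σ i) (τ i), u x ≤ ρ) :=
  statement17_general c P m a σ τ ha g hg hgs lam mu α ρ hlam hα hρ I hIsub j hj ε hε hε2 hαbig
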